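/- arXiv:1304.0180 — 3 statements merged into one kernel-verified Lean document; each statement's English description precedes it below -/
import Mathlib

section
/- The inclusions P ∩ Q ≤ R and R ≤ P + Q hold. -/
/-!
Any subspace `S` meeting `R` trivially extends to a complement `X` of `R`, which lies in `𝒢`
and so is a complement of `P` or of `Q`; hence `S` meets `P` or `Q` trivially. With `S` a line
spanned by a vector of `P ∩ Q` outside `R` this gives `P ∩ Q ≤ R`.

For `R ≤ P + Q`, let `v ∈ R` lie outside `P + Q`. Some complement of `R` is a complement of,
say, `P`; splitting `v` along it gives `p ∈ P \ R`. A complement of `R` through `p` cannot be a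
complement of `P`, so it is one of `Q`, and splitting `v` along it gives `q ∈ Q \ R`. Since
`v ∉ span {p, q}`, the plane `span {p, q}` meets `R` trivially, yet it meets both `P` and `Q`.
-/

open Submodule

/-- `X` belongs to the Grassmannian 𝒢: `X` is isomorphic (as a `K`-vector space)
to the quotient `V ⧸ X`, equivalently to one (hence every) complement of `X`. -/
def InG (K V : Type*) [DivisionRing K] [AddCommGroup V] [Module K V]
    (X : Submodule K V) : Prop :=
  Nonempty (X ≃ₗ[K] (V ⧸ X))

/-- `quotRank K V A B` is the dimension of the quotient space `B / (A ∩ B)`,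
where `A ∩ B` is viewed as a subspace of `B`.  For `A ≤ B` this is `dim (B/A)`. -/
noncomputable def quotRank (K V : Type*) [DivisionRing K] [AddCommGroup V] [Module K V]
    (A B : Submodule K V) : Cardinal :=
  Module.rank K (↥B ⧸ (A.comap B.subtype))

/-- `X` and `Y` are adjacent: `dim ((X+Y)/X) = dim ((X+Y)/Y) = 1`. -/
def Adjacent (K V : Type*) [DivisionRing K] [AddCommGroup V] [Module K V]
    (X Y : Submodule K V) : Prop :=
  quotRank K V X (X ⊔ Y) = 1 ∧ quotRank K V Y (X ⊔ Y) = 1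

section

variable {K V : Type*} [DivisionRing K] [AddCommGroup V] [Module K V]

theorem InG.of_isCompl {R X : Submodule K V} (hR : InG K V R) (h : IsCompl X R) : InG K V X :=
  let ⟨e⟩ := hR
  ⟨(quotientEquivOfIsCompl R X h.symm).symm ≪≫ₗ e.symm ≪≫ₗ (quotientEquivOfIsCompl X R h).symm⟩

theorem exists_mem_sub_mem_of_isCompl {X R P : Submodule K V} (hXR : IsCompl X R)
    (hXP : IsCompl X P) {v : V} (hvR : v ∈ R) (hvP : v ∉ P) : ∃ p ∈ P, p ∉ R ∧ v - p ∈ X := by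
  obtain ⟨x, hx, p, hp, rfl⟩ := mem_sup.mp (hXP.sup_eq_top ▸ mem_top : v ∈ X ⊔ P)
  refine ⟨p, hp, fun hpR => hvP ?_, by simpa using hx⟩
  have hx0 : x = 0 := disjoint_def.mp hXR.disjoint x hx (by simpa using sub_mem hvR hpR)
  simpa [hx0] using hp

theorem disjoint_span_pair_of_isCompl {X R : Submodule K V} (hXR : IsCompl X R) {p q v : V}
    (hpX : p ∈ X) (hqX : v - q ∈ X) (hvR : v ∈ R) (hv : v ∉ span K {p, q}) :
    Disjoint (span K {p, q}) R := by
  refine disjoint_def.mpr fun w hw hwR => ?_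
  obtain ⟨a, b, rfl⟩ := mem_span_pair.mp hw
  -- `a • p + b • q - b • v` lies in `X ⊓ R = ⊥`, so `a • p + b • q = b • v`.
  have hmemX : a • p - b • (v - q) ∈ X := sub_mem (smul_mem _ a hpX) (smul_mem _ b hqX)
  have hmemR : a • p - b • (v - q) ∈ R := by
    have hrw : a • p - b • (v - q) = (a • p + b • q) - b • v := by rw [smul_sub]; abel
    exact hrw ▸ sub_mem hwR (smul_mem _ b hvR)
  have h0 := disjoint_def.mp hXR.disjoint _ hmemX hmemR
  have hb : b = 0 := by
    by_contra hb
    refine hv ?_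
    have hbv : a • p + b • q = b • v := by rw [smul_sub] at h0; linear_combination (norm := abel) h0
    have hv' : v = b⁻¹ • (a • p + b • q) := by rw [hbv, smul_smul, inv_mul_cancel₀ hb, one_smul]
    exact hv' ▸ smul_mem _ _ hw
  simpa [hb] using h0

section Separation

variable {P Q R : Submodule K V}

theorem disjoint_or_disjoint_of_disjoint (hR : InG K V R)
    (hmain : ∀ X : Submodule K V, InG K V X → IsCompl X R → (IsCompl X P ∨ IsCompl X Q))
    {S : Submodule K V} (hS : Disjoint S R) : Disjoint S P ∨ Disjoint S Q := by
  obtain ⟨X, hSX, hXR⟩ := hS.exists_isCompl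
  exact (hmain X (hR.of_isCompl hXR) hXR).imp (·.disjoint.mono_left hSX) (·.disjoint.mono_left hSX)

theorem inf_le_of_forall_isCompl (hR : InG K V R)
    (hmain : ∀ X : Submodule K V, InG K V X → IsCompl X R → (IsCompl X P ∨ IsCompl X Q)) :
    P ⊓ Q ≤ R := by
  intro v hv
  by_contra hvR
  rcases disjoint_or_disjoint_of_disjoint hR hmain (disjoint_span_singleton_of_notMem hvR).symm
    with h | h
  · exact hvR (disjoint_span_singleton.mp h.symm hv.1 ▸ R.zero_mem)
  · exact hvR (disjoint_span_singleton.mp h.symm hv.2 ▸ R.zero_mem)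

theorem mem_sup_of_isCompl (hR : InG K V R)
    (hmain : ∀ X : Submodule K V, InG K V X → IsCompl X R → (IsCompl X P ∨ IsCompl X Q))
    {Y : Submodule K V} (hYR : IsCompl Y R) (hYP : IsCompl Y P) {v : V} (hvR : v ∈ R) :
    v ∈ P ⊔ Q := by
  by_contra hvPQ
  obtain ⟨p, hpP, hpR, -⟩ :=
    exists_mem_sub_mem_of_isCompl hYR hYP hvR fun h => hvPQ (mem_sup_left h)
  have hp0 : p ≠ 0 := fun h => hpR (h ▸ R.zero_mem)
  obtain ⟨X, hpX, hXR⟩ := (disjoint_span_singleton_of_notMem hpR).symm.exists_isCompl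
  replace hpX : p ∈ X := hpX (mem_span_singleton_self p)
  have hXQ : IsCompl X Q := (hmain X (hR.of_isCompl hXR) hXR).resolve_left
    fun h => hp0 (disjoint_def.mp h.disjoint p hpX hpP)
  obtain ⟨q, hqQ, hqR, hqX⟩ :=
    exists_mem_sub_mem_of_isCompl hXR hXQ hvR fun h => hvPQ (mem_sup_right h)
  have hpq : span K {p, q} ≤ P ⊔ Q :=
    span_le.mpr (Set.insert_subset (mem_sup_left hpP) (Set.singleton_subset_iff.mpr
      (mem_sup_right hqQ)))
  rcases disjoint_or_disjoint_of_disjoint hR hmain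
    (disjoint_span_pair_of_isCompl hXR hpX hqX hvR fun h => hvPQ (hpq h)) with h | h
  · exact hp0 (disjoint_def.mp h p (subset_span (by simp)) hpP)
  · exact hqR (disjoint_def.mp h q (subset_span (by simp)) hqQ ▸ R.zero_mem)

theorem le_sup_of_forall_isCompl (hR : InG K V R)
    (hmain : ∀ X : Submodule K V, InG K V X → IsCompl X R → (IsCompl X P ∨ IsCompl X Q)) :
    R ≤ P ⊔ Q := by
  intro v hv
  obtain ⟨Y, hY⟩ := R.exists_isCompl
  rcases hmain Y (hR.of_isCompl hY.symm) hY.symm with h | h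
  · exact mem_sup_of_isCompl hR hmain hY.symm h hv
  · exact sup_comm P Q ▸
      mem_sup_of_isCompl hR (fun X hX hXR => (hmain X hX hXR).symm) hY.symm h hv

end Separation

end

theorem stmt_4_general (K V : Type*) [DivisionRing K] [AddCommGroup V] [Module K V]
    (P Q R : Submodule K V) (hR : InG K V R)
    (hmain : ∀ X : Submodule K V, InG K V X → IsCompl X R → (IsCompl X P ∨ IsCompl X Q)) :
    P ⊓ Q ≤ R ∧ R ≤ P ⊔ Q :=
  ⟨inf_le_of_forall_isCompl hR hmain, le_sup_of_forall_isCompl hR hmain⟩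

/-- The inclusions `P ∩ Q ≤ R` and `R ≤ P + Q` hold. -/
theorem stmt_4 (K V : Type*) [DivisionRing K] [AddCommGroup V] [Module K V]
    (P Q R : Submodule K V) (hP : InG K V P) (hQ : InG K V Q) (hR : InG K V R)
    (hRP : R ≠ P) (hRQ : R ≠ Q)
    (hmain : ∀ X : Submodule K V, InG K V X → IsCompl X R → (IsCompl X P ∨ IsCompl X Q)) :
    P ⊓ Q ≤ R ∧ R ≤ P ⊔ Q :=
  stmt_4_general K V P Q R hR hmain
end

section
/- Suppose dim V = 2m is finite, so that 𝒢 is the set of m-dimensional subspaces of V. Then for any X, Y ∈ 𝒢 there exists Z ∈ 𝒢 with V = X ⊕ Z and V = Y ⊕ Z; consequently, the distant graph on 𝒢 is connected and, for m ≥ 2, has diameter 2. -/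
/-!
Two subspaces `X`, `Y` of equal finite dimension have a common complement: grow a subspace `Z`
disjoint from both one vector at a time, each new vector chosen outside `X ⊕ Z` and `Y ⊕ Z`,
which is possible because a group is never the union of two proper subgroups. Hence any two
distinct vertices of the distant graph have a common neighbour, so the graph is connected of
diameter at most `2`; for `m ≥ 2` two distinct `m`-spaces meeting nontrivially are not adjacent.
-/

open Submodule

/-- The distant graph on 𝒢: vertices are the elements of 𝒢, edges the pairs of
(distinct) complementary subspaces. -/
def distantGraph (K V : Type*) [DivisionRing K] [AddCommGroup V] [Module K V] :
    SimpleGraph {X : Submodule K V // InG K V X} where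
  Adj X Y := X ≠ Y ∧ IsCompl X.1 Y.1
  symm := ⟨fun _ _ h => ⟨h.1.symm, h.2.symm⟩⟩
  loopless := ⟨fun _ h => h.1 rfl⟩

/-- The Grassmann graph on 𝒢: vertices are the elements of 𝒢, edges the pairs of
adjacent subspaces. -/
def grassmannGraph (K V : Type*) [DivisionRing K] [AddCommGroup V] [Module K V] :
    SimpleGraph {X : Submodule K V // InG K V X} where
  Adj X Y := Adjacent K V X.1 Y.1
  symm := by
    constructor
    intro X Y h
    obtain ⟨h1, h2⟩ := h
    refine ⟨?_, ?_⟩ <;> rw [sup_comm]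
    exacts [h2, h1]
  loopless := by
    constructor
    intro X h
    obtain ⟨h1, -⟩ := h
    rw [quotRank, sup_idem, comap_subtype_self] at h1
    have : Subsingleton (↥X.1 ⧸ (⊤ : Submodule K ↥X.1)) :=
      Submodule.Quotient.subsingleton_iff.mpr rfl
    rw [rank_subsingleton'] at h1
    exact zero_ne_one h1

open Module

namespace SimpleGraph

variable {α : Type*} {G : SimpleGraph α}

theorem ediam_le_two_of_commonNeighbors_nonempty
    (h : ∀ u v, u ≠ v → (G.commonNeighbors u v).Nonempty) : G.ediam ≤ 2 :=
  ediam_le_of_edist_le fun u v => not_lt.1 fun h2 => by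
    obtain ⟨huv, -, hempty⟩ := two_lt_edist_iff.1 h2
    exact (h u v huv).ne_empty hempty

theorem diam_eq_two_of_commonNeighbors_nonempty
    (h : ∀ u v, u ≠ v → (G.commonNeighbors u v).Nonempty)
    {u v : α} (huv : u ≠ v) (hnadj : ¬G.Adj u v) : G.diam = 2 := by
  have hediam : G.ediam = 2 := le_antisymm (ediam_le_two_of_commonNeighbors_nonempty h)
    (edist_eq_two_iff.2 ⟨huv, hnadj, h u v huv⟩ ▸ edist_le_ediam)
  rw [diam, hediam]
  rfl

end SimpleGraph

namespace Submodule

theorem exists_notMem_notMem {R M : Type*} [Ring R] [AddCommGroup M] [Module R M]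
    {X Y : Submodule R M} (hX : X ≠ ⊤) (hY : Y ≠ ⊤) : ∃ v, v ∉ X ∧ v ∉ Y := by
  by_contra! h
  have hcover : ((⊤ : Submodule R M) : Set M) ⊆ X ∪ Y := fun v _ =>
    or_iff_not_imp_left.2 (h v)
  rcases AddSubgroupClass.subset_union.1 hcover with hX' | hY'
  exacts [hX (top_le_iff.1 hX'), hY (top_le_iff.1 hY')]

variable {K V : Type*} [DivisionRing K] [AddCommGroup V] [Module K V] [FiniteDimensional K V]

theorem finrank_sup_of_disjoint {X Y : Submodule K V} (h : Disjoint X Y) :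
    finrank K ↥(X ⊔ Y) = finrank K X + finrank K Y := by
  rw [← finrank_sup_add_finrank_inf_eq, h.eq_bot, finrank_bot, add_zero]

theorem exists_finrank_eq_disjoint_disjoint (X Y : Submodule K V) (n : ℕ)
    (hX : finrank K X + n ≤ finrank K V) (hY : finrank K Y + n ≤ finrank K V) :
    ∃ Z : Submodule K V, finrank K Z = n ∧ Disjoint X Z ∧ Disjoint Y Z := by
  induction n with
  | zero => exact ⟨⊥, finrank_bot K V, disjoint_bot_right, disjoint_bot_right⟩
  | succ n ih =>
    obtain ⟨Z, hZ, hXZ, hYZ⟩ := ih (by omega) (by omega)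
    have hne_top {W : Submodule K V} (hW : Disjoint W Z)
        (hdim : finrank K W + (n + 1) ≤ finrank K V) : W ⊔ Z ≠ ⊤ :=
      (lt_top_of_finrank_lt_finrank (by rw [finrank_sup_of_disjoint hW]; omega)).ne
    obtain ⟨v, hvX, hvY⟩ := exists_notMem_notMem (hne_top hXZ hX) (hne_top hYZ hY)
    have hv0 : v ≠ 0 := by
      rintro rfl
      exact hvX (zero_mem _)
    have hdisj {W : Submodule K V} (hW : Disjoint W Z) (hv : v ∉ W ⊔ Z) :
        Disjoint W (Z ⊔ K ∙ v) :=
      hW.disjoint_sup_right_of_disjoint_sup_left ((disjoint_span_singleton' hv0).2 hv)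
    have hvZ : v ∉ Z := fun h => hvX (mem_sup_right h)
    refine ⟨Z ⊔ K ∙ v, ?_, hdisj hXZ hvX, hdisj hYZ hvY⟩
    rw [finrank_sup_of_disjoint ((disjoint_span_singleton' hv0).2 hvZ), hZ,
      finrank_span_singleton hv0]

theorem exists_isCompl_isCompl_of_finrank_eq {X Y : Submodule K V}
    (h : finrank K X = finrank K Y) : ∃ Z : Submodule K V, IsCompl X Z ∧ IsCompl Y Z := by
  have hle := finrank_le X
  obtain ⟨Z, hZ, hXZ, hYZ⟩ :=
    exists_finrank_eq_disjoint_disjoint X Y (finrank K V - finrank K X) (by omega) (by omega)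
  exact ⟨Z, (isCompl_iff_disjoint _ _ (by omega)).2 hXZ,
    (isCompl_iff_disjoint _ _ (by omega)).2 hYZ⟩

theorem exists_le_finrank_eq {S : Submodule K V} {n : ℕ} (hS : finrank K S ≤ n)
    (hn : n ≤ finrank K V) : ∃ Y : Submodule K V, S ≤ Y ∧ finrank K Y = n := by
  obtain ⟨Z, hZ, hSZ, -⟩ := exists_finrank_eq_disjoint_disjoint S S (n - finrank K S)
    (by omega) (by omega)
  exact ⟨S ⊔ Z, le_sup_left, by rw [finrank_sup_of_disjoint hSZ, hZ]; omega⟩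

theorem exists_finrank_eq_ne_not_disjoint {X : Submodule K V} (h2 : 2 ≤ finrank K X)
    (hX : X ≠ ⊤) :
    ∃ Y : Submodule K V, finrank K Y = finrank K X ∧ Y ≠ X ∧ ¬Disjoint X Y := by
  obtain ⟨x, hxX, hx0⟩ := exists_mem_ne_zero_of_ne_bot (p := X) <| by
    rintro rfl
    simp at h2
  obtain ⟨v, -, hvX⟩ := SetLike.exists_of_lt hX.lt_top
  have hv0 : v ≠ 0 := by
    rintro rfl
    exact hvX (zero_mem _)
  have hS : finrank K ↥((K ∙ x) ⊔ K ∙ v) ≤ finrank K X :=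
    (finrank_add_le_finrank_add_finrank _ _).trans <| by
      rw [finrank_span_singleton hx0, finrank_span_singleton hv0]
      exact h2
  obtain ⟨Y, hSY, hY⟩ := exists_le_finrank_eq hS (finrank_le X)
  refine ⟨Y, hY, fun hYX => hvX (hYX ▸ hSY (mem_sup_right (mem_span_singleton_self v))), ?_⟩
  exact fun hdisj => hx0 (hdisj.le_bot ⟨hxX, hSY (mem_sup_left (mem_span_singleton_self x))⟩)

end Submodule

section Grassmannian

variable {K V : Type*} [DivisionRing K] [AddCommGroup V] [Module K V] [FiniteDimensional K V]
  {m : ℕ}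

theorem inG_iff_finrank_eq (hV : finrank K V = 2 * m) (X : Submodule K V) :
    InG K V X ↔ finrank K X = m := by
  have hsum := X.finrank_quotient_add_finrank
  refine ⟨fun ⟨e⟩ => ?_, fun hX => FiniteDimensional.nonempty_linearEquiv_of_finrank_eq ?_⟩
  · have := e.finrank_eq
    omega
  · omega

theorem exists_inG_isCompl_isCompl (hV : finrank K V = 2 * m) {X Y : Submodule K V}
    (hX : InG K V X) (hY : InG K V Y) : ∃ Z, InG K V Z ∧ IsCompl X Z ∧ IsCompl Y Z := by
  rw [inG_iff_finrank_eq hV] at hX hY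
  obtain ⟨Z, hXZ, hYZ⟩ := exists_isCompl_isCompl_of_finrank_eq (hX.trans hY.symm)
  have := finrank_add_eq_of_isCompl hXZ
  exact ⟨Z, (inG_iff_finrank_eq hV Z).2 (by omega), hXZ, hYZ⟩

theorem distantGraph_commonNeighbors_nonempty (hV : finrank K V = 2 * m)
    (u v : {X : Submodule K V // InG K V X}) (huv : u ≠ v) :
    ((distantGraph K V).commonNeighbors u v).Nonempty := by
  obtain ⟨Z, hZ, huZ, hvZ⟩ := exists_inG_isCompl_isCompl hV u.2 v.2
  -- `Z` differs from `u` and `v`: a subspace complementary to itself forces `⊥ = ⊤`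
  have hne {w : {X : Submodule K V // InG K V X}} (hw : IsCompl w.1 Z) : w ≠ ⟨Z, hZ⟩ := by
    rintro rfl
    have := subsingleton_of_bot_eq_top
      ((disjoint_self.1 hw.disjoint).symm.trans (codisjoint_self.1 hw.codisjoint))
    exact huv (Subtype.ext (Subsingleton.elim _ _))
  exact ⟨⟨Z, hZ⟩, ⟨hne huZ, huZ⟩, ⟨hne hvZ, hvZ⟩⟩

end Grassmannian

/-- For `dim V = 2m` finite (so that 𝒢 is the set of `m`-dimensional subspaces):
any `X, Y ∈ 𝒢` have a common complement `Z ∈ 𝒢`; consequently the distant graph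
is connected and, for `m ≥ 2`, has diameter `2`. -/
theorem stmt_15 (K V : Type*) [DivisionRing K] [AddCommGroup V] [Module K V]
    (m : ℕ) (hV : Module.rank K V = (2 * m : ℕ)) :
    (∀ X : Submodule K V, InG K V X ↔ Module.rank K X = (m : ℕ)) ∧
    (∀ X Y : Submodule K V, InG K V X → InG K V Y →
      ∃ Z : Submodule K V, InG K V Z ∧ IsCompl X Z ∧ IsCompl Y Z) ∧
    (distantGraph K V).Connected ∧
    (2 ≤ m → (distantGraph K V).diam = 2) := by
  have : FiniteDimensional K V := Module.finite_of_rank_eq_nat hV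
  have hV' : finrank K V = 2 * m := finrank_eq_of_rank_eq hV
  have hcommon := distantGraph_commonNeighbors_nonempty hV'
  obtain ⟨X, -, hX⟩ := Submodule.exists_le_finrank_eq (S := (⊥ : Submodule K V)) (n := m)
    (by rw [finrank_bot]; omega) (by omega)
  have hXG : InG K V X := (inG_iff_finrank_eq hV' X).2 hX
  refine ⟨fun Y => by rw [inG_iff_finrank_eq hV', ← finrank_eq_rank, Nat.cast_inj],
    fun _ _ => exists_inG_isCompl_isCompl hV', ?_, fun hm => ?_⟩
  · have : Nonempty {X : Submodule K V // InG K V X} := ⟨⟨X, hXG⟩⟩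
    exact SimpleGraph.connected_of_ediam_ne_top <| ne_top_of_le_ne_top (by decide)
      (SimpleGraph.ediam_le_two_of_commonNeighbors_nonempty hcommon)
  · have hXtop : X ≠ ⊤ := fun h => by rw [h, finrank_top] at hX; omega
    obtain ⟨Y, hY, hYX, hXY⟩ := Submodule.exists_finrank_eq_ne_not_disjoint (hX ▸ hm) hXtop
    exact SimpleGraph.diam_eq_two_of_commonNeighbors_nonempty (u := ⟨X, hXG⟩)
      (v := ⟨Y, (inG_iff_finrank_eq hV' Y).2 (hY.trans hX)⟩) hcommon
      (fun h => hYX (congrArg Subtype.val h).symm) fun h => hXY h.2.disjoint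
end

section
/- Suppose V is infinite-dimensional. Then there exists a bijection φ : 𝒢 → 𝒢 such that for all X, Y ∈ 𝒢, X and Y are adjacent if and only if φ(X) and φ(Y) are adjacent (so φ is an automorphism of the Grassmann graph), but there exist P, Q ∈ 𝒢 with V = P ⊕ Q for which φ(P) and φ(Q) are not complementary (so φ is not an automorphism of the distant graph). -/
/-!
Call subspaces `X`, `Y` commensurable when `(X + Y)/X` and `(X + Y)/Y` are finite-dimensional.
This is an equivalence relation, invariant under linear automorphisms, and adjacent subspaces
are commensurable. Write `V = P ⊕ Q₁ ⊕ Q₂` with `P`, `Q₁`, `Q₂` all of dimension `dim V`, put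
`Q = Q₁ ⊕ Q₂`, and let `g` be an automorphism with `g Q = Q₁`. The classes of `P`, `Q` and `Q₁`
are pairwise distinct, so applying `g` on the class of `Q`, `g⁻¹` on the class of `Q₁` and the
identity elsewhere is an involution of 𝒢 preserving adjacency. It fixes `P` and sends `Q` to
`Q₁`, but `P + Q₁` misses `Q₂`.
-/

open Submodule

open Cardinal

universe u

section QuotRank

variable {K : Type*} {V W : Type u} [DivisionRing K] [AddCommGroup V] [Module K V]
  [AddCommGroup W] [Module K W]

lemma quotRank_eq_rank_map (A B : Submodule K V) :
    quotRank K V A B = Module.rank K (B.map A.mkQ) := by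
  have e := (A.mkQ ∘ₗ B.subtype).quotKerEquivRange
  rw [LinearMap.ker_comp, ker_mkQ, LinearMap.range_comp, range_subtype] at e
  exact e.rank_eq

lemma quotRank_self (A : Submodule K V) : quotRank K V A A = 0 := by
  rw [quotRank_eq_rank_map, mkQ_map_self, rank_bot]

lemma quotRank_sup_right (A B : Submodule K V) : quotRank K V A (A ⊔ B) = quotRank K V A B := by
  rw [quotRank_eq_rank_map, quotRank_eq_rank_map, Submodule.map_sup, mkQ_map_self, bot_sup_eq]

lemma quotRank_map (e : V ≃ₗ[K] W) (A B : Submodule K V) :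
    quotRank K W (A.map (e : V →ₗ[K] W)) (B.map (e : V →ₗ[K] W)) = quotRank K V A B := by
  set A' := A.map (e : V →ₗ[K] W)
  let q : (V ⧸ A) ≃ₗ[K] (W ⧸ A') := Quotient.equiv A A' e rfl
  have hq : (q : V ⧸ A →ₗ[K] W ⧸ A') ∘ₗ A.mkQ = A'.mkQ ∘ₗ e := by
    ext; rfl
  have hB : (B.map (e : V →ₗ[K] W)).map A'.mkQ = (B.map A.mkQ).map (q : V ⧸ A →ₗ[K] W ⧸ A') := by
    rw [← map_comp, ← map_comp, hq]
  rw [quotRank_eq_rank_map, quotRank_eq_rank_map, hB]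
  exact (q.submoduleMap _).rank_eq.symm

lemma rank_le_rank_map_mkQ_add (p q : Submodule K V) :
    Module.rank K q ≤ Module.rank K (q.map p.mkQ) + Module.rank K p := by
  have h := LinearMap.lift_rank_comap_le (f := p.mkQ) (q.map p.mkQ)
  rw [lift_id, lift_id, lift_id, ker_mkQ] at h
  exact (rank_mono (le_comap_map _ q)).trans h

lemma quotRank_le_add (X Y Z : Submodule K V) :
    quotRank K V X Z ≤ quotRank K V Y Z + quotRank K V X Y := by
  simp only [quotRank_eq_rank_map]
  set p := Y.map X.mkQ
  have hY : Y ≤ LinearMap.ker (p.mkQ ∘ₗ X.mkQ) := fun y hy => by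
    simpa [p] using mem_map_of_mem (f := X.mkQ) hy
  have hZ : (Z.map X.mkQ).map p.mkQ = (Z.map Y.mkQ).map (Y.liftQ _ hY) := by
    rw [← map_comp, ← map_comp, Y.liftQ_mkQ]
  calc Module.rank K (Z.map X.mkQ)
      ≤ Module.rank K ((Z.map X.mkQ).map p.mkQ) + Module.rank K p :=
        rank_le_rank_map_mkQ_add p _
    _ ≤ Module.rank K (Z.map Y.mkQ) + Module.rank K p := by
        rw [hZ]; gcongr; exact rank_map_le _ _

lemma rank_le_quotRank_of_disjoint {A B S : Submodule K V} (hAS : Disjoint A S) (hSB : S ≤ B) :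
    Module.rank K S ≤ quotRank K V A B := by
  have hinj : Function.Injective (A.mkQ ∘ₗ S.subtype) := by
    rw [← LinearMap.ker_eq_bot, LinearMap.ker_comp, ker_mkQ, ← disjoint_iff_comap_eq_bot]
    exact hAS.symm
  rw [quotRank_eq_rank_map]
  calc Module.rank K S = Module.rank K (LinearMap.range (A.mkQ ∘ₗ S.subtype)) :=
        (LinearEquiv.ofInjective _ hinj).rank_eq
    _ ≤ Module.rank K (B.map A.mkQ) := by
        rw [LinearMap.range_comp, range_subtype]; exact rank_mono (map_mono hSB)

end QuotRank

namespace Submodule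

variable {K : Type*} {V W : Type u} [DivisionRing K] [AddCommGroup V] [Module K V]
  [AddCommGroup W] [Module K W]

def Commensurable (X Y : Submodule K V) : Prop :=
  quotRank K V X Y < ℵ₀ ∧ quotRank K V Y X < ℵ₀

namespace Commensurable

lemma refl (X : Submodule K V) : X.Commensurable X := by
  simp [Commensurable, quotRank_self, aleph0_pos]

lemma symm {X Y : Submodule K V} (h : X.Commensurable Y) : Y.Commensurable X :=
  ⟨h.2, h.1⟩

lemma trans {X Y Z : Submodule K V} (hXY : X.Commensurable Y) (hYZ : Y.Commensurable Z) :
    X.Commensurable Z :=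
  ⟨(quotRank_le_add X Y Z).trans_lt (add_lt_aleph0 hYZ.1 hXY.1),
    (quotRank_le_add Z Y X).trans_lt (add_lt_aleph0 hXY.2 hYZ.2)⟩

end Commensurable

lemma commensurable_map_iff (e : V ≃ₗ[K] W) {X Y : Submodule K V} :
    (X.map (e : V →ₗ[K] W)).Commensurable (Y.map (e : V →ₗ[K] W)) ↔ X.Commensurable Y := by
  simp only [Commensurable, quotRank_map]

lemma not_commensurable_of_disjoint {X Y S : Submodule K V} (hXS : Disjoint X S)
    (hS : ℵ₀ ≤ Module.rank K S) (hSY : S ≤ Y) : ¬ X.Commensurable Y := fun h =>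
  (hS.trans (rank_le_quotRank_of_disjoint hXS hSY)).not_gt h.1

end Submodule

section Adjacent

variable {K : Type*} {V W : Type u} [DivisionRing K] [AddCommGroup V] [Module K V]
  [AddCommGroup W] [Module K W]

lemma adjacent_iff_quotRank {X Y : Submodule K V} :
    Adjacent K V X Y ↔ quotRank K V X Y = 1 ∧ quotRank K V Y X = 1 := by
  rw [Adjacent, quotRank_sup_right, sup_comm, quotRank_sup_right]

lemma Adjacent.commensurable {X Y : Submodule K V} (h : Adjacent K V X Y) :
    X.Commensurable Y := by
  rw [adjacent_iff_quotRank] at h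
  exact ⟨h.1 ▸ one_lt_aleph0, h.2 ▸ one_lt_aleph0⟩

lemma adjacent_map_iff (e : V ≃ₗ[K] W) {X Y : Submodule K V} :
    Adjacent K W (X.map (e : V →ₗ[K] W)) (Y.map (e : V →ₗ[K] W)) ↔ Adjacent K V X Y := by
  simp only [Adjacent, ← Submodule.map_sup, quotRank_map]

end Adjacent

section InG

variable {K : Type*} {V W : Type u} [DivisionRing K] [AddCommGroup V] [Module K V]
  [AddCommGroup W] [Module K W]

lemma InG.map {X : Submodule K V} (h : InG K V X) (e : V ≃ₗ[K] W) :
    InG K W (X.map (e : V →ₗ[K] W)) :=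
  let ⟨f⟩ := h
  ⟨((e.submoduleMap X).symm.trans f).trans (Submodule.Quotient.equiv X _ e rfl)⟩

lemma inG_of_isCompl {X Y : Submodule K V} (h : IsCompl X Y)
    (hr : Module.rank K X = Module.rank K Y) : InG K V X :=
  let ⟨f⟩ := nonempty_linearEquiv_of_rank_eq hr
  ⟨f.trans (Submodule.quotientEquivOfIsCompl X Y h).symm⟩

def InG.perm (g : V ≃ₗ[K] V) : Equiv.Perm {X : Submodule K V // InG K V X} :=
  (Submodule.orderIsoMapComap g).toEquiv.subtypeEquiv fun X =>
    ⟨fun h => h.map g, fun (h : InG K V (X.map (g : V →ₗ[K] V))) => by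
      simpa only [(Submodule.map_symm_eq_iff g).mpr rfl] using h.map g.symm⟩

@[simp]
lemma InG.perm_apply_coe (g : V ≃ₗ[K] V) (X : {X : Submodule K V // InG K V X}) :
    (InG.perm g X : Submodule K V) = X.1.map (g : V →ₗ[K] V) :=
  rfl

end InG

namespace Equiv.Perm

variable {α : Type*} (σ : Equiv.Perm α) (A : Set α)

open Classical in
noncomputable def exchange (x : α) : α :=
  if x ∈ A then σ x else if σ.symm x ∈ A then σ.symm x else x

variable {σ A}

lemma exchange_of_mem {x : α} (hx : x ∈ A) : exchange σ A x = σ x := by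
  rw [exchange, if_pos hx]

lemma exchange_of_symm_mem {x : α} (hx : x ∉ A) (hx' : σ.symm x ∈ A) :
    exchange σ A x = σ.symm x := by
  rw [exchange, if_neg hx, if_pos hx']

lemma exchange_of_notMem {x : α} (hx : x ∉ A) (hx' : σ.symm x ∉ A) : exchange σ A x = x := by
  rw [exchange, if_neg hx, if_neg hx']

lemma exchange_involutive (hA : ∀ x ∈ A, σ x ∉ A) : Function.Involutive (exchange σ A) := by
  intro x
  by_cases hx : x ∈ A
  · rw [exchange_of_mem hx, exchange_of_symm_mem (hA x hx) (by simpa using hx), symm_apply_apply]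
  by_cases hx' : σ.symm x ∈ A
  · rw [exchange_of_symm_mem hx hx', exchange_of_mem hx', apply_symm_apply]
  · rw [exchange_of_notMem hx hx', exchange_of_notMem hx hx']

lemma exchange_rel {r : α → α → Prop} (hσ : ∀ x y, r (σ x) (σ y) ↔ r x y)
    (hA : ∀ x y, r x y → (x ∈ A ↔ y ∈ A)) {x y : α} (h : r x y) :
    r (exchange σ A x) (exchange σ A y) := by
  have hinv : r (σ.symm x) (σ.symm y) := by rwa [← hσ, apply_symm_apply, apply_symm_apply]
  by_cases hx : x ∈ A
  · rwa [exchange_of_mem hx, exchange_of_mem ((hA x y h).1 hx), hσ]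
  have hy : y ∉ A := fun hy => hx ((hA x y h).2 hy)
  by_cases hx' : σ.symm x ∈ A
  · rwa [exchange_of_symm_mem hx hx', exchange_of_symm_mem hy ((hA _ _ hinv).1 hx')]
  · rwa [exchange_of_notMem hx hx', exchange_of_notMem hy (fun hy' => hx' ((hA _ _ hinv).2 hy'))]

lemma exchange_rel_iff {r : α → α → Prop} (hσA : ∀ x ∈ A, σ x ∉ A)
    (hσ : ∀ x y, r (σ x) (σ y) ↔ r x y) (hA : ∀ x y, r x y → (x ∈ A ↔ y ∈ A)) {x y : α} :
    r (exchange σ A x) (exchange σ A y) ↔ r x y := by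
  refine ⟨fun h => ?_, exchange_rel hσ hA⟩
  simpa only [exchange_involutive hσA _] using exchange_rel hσ hA h

end Equiv.Perm

section Basis

open Set Submodule

variable {K : Type*} {V : Type u} [DivisionRing K] [AddCommGroup V] [Module K V]

lemma Infinite.nonempty_sum_self_equiv (ι : Type*) [Infinite ι] : Nonempty (ι ⊕ ι ≃ ι) :=
  Cardinal.eq.mp <| by rw [mk_sum, lift_id, add_eq_self (aleph0_le_mk ι)]

lemma exists_basis_sum_sum_self (hV : ¬ FiniteDimensional K V) :
    ∃ (ι : Type u) (_ : Infinite ι), Nonempty (ι ⊕ ι ≃ ι) ∧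
      Nonempty (Module.Basis (ι ⊕ ι ⊕ ι) K V) := by
  let b := Module.Basis.ofVectorSpace K V
  have : Infinite (Module.Basis.ofVectorSpaceIndex K V) := by
    by_contra h
    have := not_infinite_iff_finite.mp h
    exact hV (Module.Finite.of_basis b)
  obtain ⟨j⟩ := Infinite.nonempty_sum_self_equiv (Module.Basis.ofVectorSpaceIndex K V)
  exact ⟨_, this, ⟨j⟩, ⟨b.reindex (j.symm.trans (Equiv.sumCongr (Equiv.refl _) j.symm))⟩⟩

variable {I : Type u} (b : Module.Basis I K V)

lemma Module.Basis.rank_span_image (s : Set I) : Module.rank K (span K (b '' s)) = #s := by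
  rw [image_eq_range,
    rank_span (v := fun x : s => b x) (b.linearIndependent.comp _ Subtype.val_injective),
    mk_range_eq (fun x : s => b x) (b.injective.comp Subtype.val_injective)]

lemma Module.Basis.map_equiv_span_image (e : I ≃ I) (s : Set I) :
    (span K (b '' s)).map (b.equiv b e : V →ₗ[K] V) = span K (b '' (e '' s)) := by
  simp only [map_span, image_image, LinearEquiv.coe_coe, Module.Basis.equiv_apply]

lemma Module.Basis.not_commensurable_span_image {s t u : Set I} (hsu : Disjoint s u)
    (hut : u ⊆ t) (hu : u.Infinite) :
    ¬ (span K (b '' s)).Commensurable (span K (b '' t)) := by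
  have : Infinite u := hu.to_subtype
  refine not_commensurable_of_disjoint (b.linearIndependent.disjoint_span_image hsu) ?_
    (span_mono (image_mono hut))
  rw [b.rank_span_image]
  exact aleph0_le_mk u

end Basis

section Configuration

open Set Submodule Sum

variable {K : Type*} {V : Type u} [DivisionRing K] [AddCommGroup V] [Module K V]

lemma exists_isCompl_not_isCompl_map (hV : ¬ FiniteDimensional K V) :
    ∃ (P Q : Submodule K V) (g : V ≃ₗ[K] V), InG K V P ∧ InG K V Q ∧ IsCompl P Q ∧
      ¬ IsCompl P (Q.map (g : V →ₗ[K] V)) ∧ ¬ P.Commensurable Q ∧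
      ¬ P.Commensurable (Q.map (g : V →ₗ[K] V)) ∧ ¬ Q.Commensurable (Q.map (g : V →ₗ[K] V)) := by
  obtain ⟨ι, _, ⟨j⟩, ⟨b⟩⟩ := exists_basis_sum_sum_self (K := K) hV
  let e : ι ⊕ ι ⊕ ι ≃ ι ⊕ ι ⊕ ι := (Equiv.sumCongr j.symm j).trans
    ((Equiv.sumAssoc ι ι ι).trans (Equiv.sumCongr (Equiv.refl ι) (Equiv.sumComm ι ι)))
  have he : e '' range inr = range (inr ∘ inl) := by
    rw [← range_comp]
    exact EquivLike.range_comp (inr ∘ inl : ι → ι ⊕ ι ⊕ ι) j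
  have hgQ : (span K (b '' range inr)).map (b.equiv b e : V →ₗ[K] V) =
      span K (b '' range (inr ∘ inl)) := by
    rw [b.map_equiv_span_image, he]
  have hPQ : IsCompl (span K (b '' range inl)) (span K (b '' range inr)) :=
    b.linearIndependent.isCompl_span_image b.span_eq isCompl_range_inl_range_inr
  have hrank :
      Module.rank K (span K (b '' range inl)) = Module.rank K (span K (b '' range inr)) := by
    rw [b.rank_span_image, b.rank_span_image, mk_range_eq _ inl_injective,
      mk_range_eq _ inr_injective, mk_congr j]
  have hmid : Disjoint (range inl) (range (inr ∘ inl : ι → ι ⊕ ι ⊕ ι)) :=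
    isCompl_range_inl_range_inr.disjoint.mono_right (range_comp_subset_range _ _)
  refine ⟨_, _, b.equiv b e, inG_of_isCompl hPQ hrank, inG_of_isCompl hPQ.symm hrank.symm, hPQ,
    ?_, ?_, ?_, ?_⟩
  · rw [hgQ]
    intro h
    obtain ⟨i⟩ := ‹Infinite ι›.nonempty
    have hmem : b (inr (inr i)) ∈ span K (b '' (range inl ∪ range (inr ∘ inl))) := by
      rw [image_union, span_union, h.codisjoint.eq_top]
      exact mem_top
    exact b.linearIndependent.notMem_span_image (by simp) hmem
  · exact b.not_commensurable_span_image isCompl_range_inl_range_inr.disjoint subset_rfl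
      (infinite_range_of_injective inr_injective)
  · rw [hgQ]
    exact b.not_commensurable_span_image hmid subset_rfl
      (infinite_range_of_injective (inr_injective.comp inl_injective))
  · rw [hgQ]
    refine fun h => b.not_commensurable_span_image (u := range (inr ∘ inr)) ?_
      (range_comp_subset_range _ _) (infinite_range_of_injective (inr_injective.comp inr_injective))
      h.symm
    rw [range_comp, range_comp]
    exact (disjoint_image_iff inr_injective).2 isCompl_range_inl_range_inr.disjoint

end Configuration

/-- For `V` infinite-dimensional there is an automorphism of the Grassmann graph
on 𝒢 which is not an automorphism of the distant graph: it maps some pair of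
complementary elements of 𝒢 to a non-complementary pair. -/
theorem stmt_19 (K V : Type*) [DivisionRing K] [AddCommGroup V] [Module K V]
    (hV : ¬ FiniteDimensional K V) :
    ∃ φ : {X : Submodule K V // InG K V X} → {X : Submodule K V // InG K V X},
      Function.Bijective φ ∧
      (∀ X Y : {X : Submodule K V // InG K V X},
        Adjacent K V X.1 Y.1 ↔ Adjacent K V (φ X).1 (φ Y).1) ∧
      ∃ P Q : {X : Submodule K V // InG K V X},
        IsCompl P.1 Q.1 ∧ ¬ IsCompl (φ P).1 (φ Q).1 := by
  obtain ⟨P, Q, g, hP, hQ, hPQ, hPgQ, hnPQ, hnPgQ, hnQgQ⟩ := exists_isCompl_not_isCompl_map hV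
  set σ := InG.perm g
  let A : Set {X : Submodule K V // InG K V X} := {X | X.1.Commensurable Q}
  have hσA : ∀ X ∈ A, σ X ∉ A := fun X hX hgX =>
    hnQgQ (hgX.symm.trans ((commensurable_map_iff g).2 hX))
  have hA : ∀ X Y : {X : Submodule K V // InG K V X}, Adjacent K V X.1 Y.1 → (X ∈ A ↔ Y ∈ A) :=
    fun X Y h => ⟨h.commensurable.symm.trans, h.commensurable.trans⟩
  have hPA : (⟨P, hP⟩ : {X : Submodule K V // InG K V X}) ∉ A := hnPQ
  have hPA' : σ.symm ⟨P, hP⟩ ∉ A := fun h => hnPgQ <| by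
    simpa only [σ, ← InG.perm_apply_coe, Equiv.apply_symm_apply] using
      (commensurable_map_iff g).2 h
  have hQA : (⟨Q, hQ⟩ : {X : Submodule K V // InG K V X}) ∈ A := Submodule.Commensurable.refl Q
  refine ⟨σ.exchange A, (Equiv.Perm.exchange_involutive hσA).bijective,
    fun X Y => (Equiv.Perm.exchange_rel_iff hσA (fun X Y => adjacent_map_iff g) hA).symm,
    ⟨P, hP⟩, ⟨Q, hQ⟩, hPQ, ?_⟩
  rw [Equiv.Perm.exchange_of_notMem hPA hPA', Equiv.Perm.exchange_of_mem hQA, InG.perm_apply_coe]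
  exact hPgQ
end
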